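/- arXiv:1712.03251 — 7 statements merged into one kernel-verified Lean document; each statement's English description precedes it below -/
import Mathlib

section
/- For ordinals α < β ≤ ε₀, if α <_k β (i.e., one can descend from β to α by repeatedly taking the k-th member of the fundamental sequence) and k ≤ n, then α <_n β. -/
namespace SlowCon

open ONote

/-- Fast-growing hierarchy with `F_{α+1}(n) = F_α^[n+1](n)`, standard fundamental sequences. -/
def F : ONote → ℕ → ℕ
  | o =>
    match fundamentalSequence o, fundamentalSequence_has_prop o with
    | Sum.inl none, _ => fun n => n + 1
    | Sum.inl (some a), h =>
      have : a < o := by rw [ONote.lt_def, h.1]; exact Order.lt_succ _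
      fun n => (F a)^[n + 1] n
    | Sum.inr f, h => fun n =>
      have : f n < o := (h.2.1 n).2.1
      F (f n) n
  termination_by o => o

/-- The `k`-th member of the fundamental sequence (predecessor at successors, `0` at `0`). -/
def fs (o : ONote) (k : ℕ) : ONote :=
  match fundamentalSequence o with
  | Sum.inl none => 0
  | Sum.inl (some a) => a
  | Sum.inr f => f k

/-- `stepDown k a b` : one can descend from `b` to `a` via `k`-th members of
fundamental sequences (at least one step). -/
def stepDown (k : ℕ) (a b : ONote) : Prop :=
  Relation.TransGen (fun x y => y ≠ 0 ∧ x = fs y k) a b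

/-- Tower of ω's: `wtower 0 = 1`, `wtower (n+1) = ω ^ wtower n`. -/
def wtower : ℕ → ONote
  | 0 => 1
  | n + 1 => ONote.oadd (wtower n) 1 0

/-- `F_{ε₀}(n) := F_{ω_{n+1}}(n)`. -/
def Feps (n : ℕ) : ℕ := F (wtower (n + 1)) n

/-- Ordinals `≤ ε₀`: `none` stands for `ε₀`, `some a` for `a < ε₀`. -/
def fsE : Option ONote → ℕ → Option ONote
  | none, k => some (wtower (k + 1))
  | some a, k => some (fs a k)

/-- Step-down relation on ordinals `≤ ε₀` (with `{ε₀}(k) = ω_{k+1}`). -/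
def stepDownE (k : ℕ) (a b : Option ONote) : Prop :=
  Relation.TransGen (fun x y => y ≠ some 0 ∧ x = fsE y k) a b

/-- Fast-growing hierarchy at indices `≤ ε₀`. -/
def FE : Option ONote → ℕ → ℕ
  | none, n => Feps n
  | some a, n => F a n

/-- Normal form for indices `≤ ε₀`. -/
def NFE : Option ONote → Prop
  | none => True
  | some a => a.NF

end SlowCon

namespace SlowCon

open ONote

/-- `iterRel G j x y` : `y` is obtained from `x` by `j` applications of the graph `G`. -/
def iterRel (G : ℕ → ℕ → Prop) : ℕ → ℕ → ℕ → Prop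
  | 0, x, y => y = x
  | j + 1, x, y => ∃ z, iterRel G j x z ∧ G z y

/-- Graph relation of the fast-growing hierarchy: `FRel α x y` means `F_α(x) = y`. -/
def FRel : ONote → ℕ → ℕ → Prop
  | o =>
    match fundamentalSequence o, fundamentalSequence_has_prop o with
    | Sum.inl none, _ => fun x y => y = x + 1
    | Sum.inl (some a), h =>
      have : a < o := by rw [ONote.lt_def, h.1]; exact Order.lt_succ _
      fun x y => iterRel (FRel a) (x + 1) x y
    | Sum.inr f, h => fun x y =>
      have : f x < o := (h.2.1 x).2.1
      FRel (f x) x y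
  termination_by o => o

/-- Graph relation for indices `≤ ε₀`, with `F_{ε₀}(x) = F_{ω_{x+1}}(x)`. -/
def FRelE : Option ONote → ℕ → ℕ → Prop
  | none, x, y => FRel (wtower (x + 1)) x y
  | some a, x, y => FRel a x y

/-- `OltE a b` : `a < b` among ordinals `≤ ε₀` (`none` = `ε₀`). -/
def OltE : Option ONote → Option ONote → Prop
  | some x, some y => x < y
  | some _, none => True
  | none, _ => False

/-- Finite levels of the fast-growing hierarchy. -/
def Ffin : ℕ → ℕ → ℕ
  | 0 => fun m => m + 1
  | k + 1 => fun m => (Ffin k)^[m + 1] m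

/-- `tower x α = ω_x^α` : `x`-fold exponential tower over `α`. -/
def tower : ℕ → ONote → ONote
  | 0, a => a
  | k + 1, a => ONote.oadd (tower k a) 1 0

/-- Progressiveness of a predicate on ordinal notations below ε₀. -/
def ProgO (Q : ONote → Prop) : Prop := ∀ a : ONote, (∀ b < a, Q b) → Q a

/-- Transfinite induction up to `α` for `Q`. -/
def TIO (α : ONote) (Q : ONote → Prop) : Prop := ProgO Q → ∀ β < α, Q β

open Classical in
/-- `FepsInv x` : the largest `z ≤ x` with `F_{ε₀}(z) ≤ x`, or `0` if there is none. -/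
noncomputable def FepsInv (x : ℕ) : ℕ :=
  ((Finset.range (x + 1)).filter fun z => Feps z ≤ x).sup id

end SlowCon

/-!
For `k ≤ n` the key fact is that `{o}(k)` is reachable from `{o}(n)` by (zero or more) `n`-steps;
then a `k`-step `β ↦ {β}(k)` is replaced by the `n`-descent `β ↦ {β}(n) ↦ ⋯ ↦ {β}(k)`.
The key fact is proved along the Cantor normal form: `{ω^a·m + b}` only changes the last term,
`{ω^a·(j+1)}(k) = ω^a·j + {ω^a}(k)`, for a successor `a = a' + 1` one lowers the coefficient of
`{ω^a}(n) = ω^a'·(n+1)` down to `k+1`, and for a limit `a` one has `{ω^a}(k) = ω^{{a}(k)}` and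
an `n`-step `x ↦ {x}(n)` lifts to an `n`-descent `ω^x ↦ ⋯ ↦ ω^{{x}(n)}`.
At `ε₀`, `{ε₀}(k) = ω_{k+1}` is reached from `{ε₀}(n) = ω_{n+1}` since `ω_{j+1} = ω^{ω_j}`
descends to `ω_j` by lifting the same way.
-/

namespace SlowCon

open ONote Relation

/-- `stepDown n` and `stepDownE n` are, definitionally, the transitive closures of these. -/
def FsStep (n : ℕ) (x y : ONote) : Prop := y ≠ 0 ∧ x = fs y n

def FsStepE (n : ℕ) (x y : Option ONote) : Prop := y ≠ some 0 ∧ x = fsE y n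

theorem fs_of_fundamentalSequence_eq_some {o a : ONote}
    (h : fundamentalSequence o = Sum.inl (some a)) (n : ℕ) : fs o n = a := by
  unfold fs; rw [h]

theorem fs_of_fundamentalSequence_eq_inr {o : ONote} {f : ℕ → ONote}
    (h : fundamentalSequence o = Sum.inr f) (n : ℕ) : fs o n = f n := by
  unfold fs; rw [h]

theorem eq_zero_of_fundamentalSequence_eq_none {o : ONote}
    (h : fundamentalSequence o = Sum.inl none) : o = 0 := by
  have hp := fundamentalSequence_has_prop o
  rw [h] at hp
  exact hp

theorem fs_lt {o : ONote} (h : o ≠ 0) (n : ℕ) : fs o n < o := by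
  have hp := fundamentalSequence_has_prop o
  rcases e : fundamentalSequence o with (_ | a) | f
  · exact absurd (eq_zero_of_fundamentalSequence_eq_none e) h
  · rw [e] at hp
    rw [fs_of_fundamentalSequence_eq_some e, ONote.lt_def, hp.1]
    exact Order.lt_succ _
  · rw [e] at hp
    rw [fs_of_fundamentalSequence_eq_inr e]
    exact (hp.2.1 n).2.1

theorem fs_oadd_of_ne_zero (a : ONote) (m : ℕ+) {b : ONote} (hb : b ≠ 0) (n : ℕ) :
    fs (oadd a m b) n = oadd a m (fs b n) := by
  rcases e : fundamentalSequence b with (_ | b') | f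
  · exact absurd (eq_zero_of_fundamentalSequence_eq_none e) hb
  · rw [fs_of_fundamentalSequence_eq_some (by rw [fundamentalSequence, e]),
      fs_of_fundamentalSequence_eq_some e]
  · rw [fs_of_fundamentalSequence_eq_inr (f := fun i => oadd a m (f i))
      (by rw [fundamentalSequence, e]), fs_of_fundamentalSequence_eq_inr e]

theorem fs_oadd_zero_one (n : ℕ) : fs (oadd 0 1 0) n = 0 := rfl

theorem fs_oadd_one_of_fundamentalSequence_eq_some {a a' : ONote}
    (e : fundamentalSequence a = Sum.inl (some a')) (n : ℕ) :
    fs (oadd a 1 0) n = oadd a' n.succPNat 0 :=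
  fs_of_fundamentalSequence_eq_inr (f := fun i => oadd a' i.succPNat 0)
    (by rw [fundamentalSequence, e]; rfl) n

theorem fs_oadd_one_of_fundamentalSequence_eq_inr {a : ONote} {f : ℕ → ONote}
    (e : fundamentalSequence a = Sum.inr f) (n : ℕ) :
    fs (oadd a 1 0) n = oadd (fs a n) 1 0 := by
  rw [fs_of_fundamentalSequence_eq_inr e, fs_of_fundamentalSequence_eq_inr
    (f := fun i => oadd (f i) 1 0) (by rw [fundamentalSequence, e]; rfl)]

theorem fs_oadd_succ (a : ONote) (j n : ℕ) :
    fs (oadd a (j + 1).succPNat 0) n = oadd a j.succPNat (fs (oadd a 1 0) n) := by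
  rcases e : fundamentalSequence a with (_ | a') | f
  · rw [eq_zero_of_fundamentalSequence_eq_none e]
    rfl
  · rw [fs_oadd_one_of_fundamentalSequence_eq_some e, fs_of_fundamentalSequence_eq_inr
      (f := fun i => oadd a j.succPNat (oadd a' i.succPNat 0))
      (by rw [fundamentalSequence, e]; rfl)]
  · rw [fs_oadd_one_of_fundamentalSequence_eq_inr e, fs_of_fundamentalSequence_eq_inr e,
      fs_of_fundamentalSequence_eq_inr (f := fun i => oadd a j.succPNat (oadd (f i) 1 0))
      (by rw [fundamentalSequence, e]; rfl)]

theorem fsStep_oadd {n : ℕ} (a : ONote) (m : ℕ+) {x y : ONote} (h : FsStep n x y) :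
    FsStep n (oadd a m x) (oadd a m y) :=
  ⟨nofun, by rw [h.2, fs_oadd_of_ne_zero a m h.1]⟩

theorem reflTransGen_oadd {n : ℕ} (a : ONote) (m : ℕ+) {x y : ONote}
    (h : ReflTransGen (FsStep n) x y) : ReflTransGen (FsStep n) (oadd a m x) (oadd a m y) :=
  ReflTransGen.lift (oadd a m) (fun _ _ => fsStep_oadd a m) _ _ h

theorem reflTransGen_zero_left (n : ℕ) (o : ONote) : ReflTransGen (FsStep n) 0 o := by
  by_cases h : o = 0
  · rw [h]
  · exact (reflTransGen_zero_left n (fs o n)).tail ⟨h, rfl⟩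
termination_by o
decreasing_by exact fs_lt h n

theorem stepDown_oadd_succPNat_succ (n : ℕ) (a : ONote) (j : ℕ) :
    stepDown n (oadd a j.succPNat 0) (oadd a (j + 1).succPNat 0) :=
  .tail' (reflTransGen_oadd a j.succPNat (reflTransGen_zero_left n _))
    ⟨nofun, (fs_oadd_succ a j n).symm⟩

theorem reflTransGen_oadd_succPNat (n : ℕ) (a : ONote) {i j : ℕ} (h : i ≤ j) :
    ReflTransGen (FsStep n) (oadd a i.succPNat 0) (oadd a j.succPNat 0) := by
  induction j, h using Nat.le_induction with
  | base => rfl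
  | succ j _ ih => exact ih.trans (stepDown_oadd_succPNat_succ n a j).to_reflTransGen

theorem stepDown_opow_of_fsStep {n : ℕ} {x y : ONote} (h : FsStep n x y) :
    stepDown n (oadd x 1 0) (oadd y 1 0) := by
  obtain ⟨hy, rfl⟩ := h
  rcases e : fundamentalSequence y with (_ | y') | f
  · exact absurd (eq_zero_of_fundamentalSequence_eq_none e) hy
  · rw [fs_of_fundamentalSequence_eq_some e]
    exact .tail' (reflTransGen_oadd_succPNat n y' (Nat.zero_le n))
      ⟨nofun, (fs_oadd_one_of_fundamentalSequence_eq_some e n).symm⟩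
  · exact .single ⟨nofun, (fs_oadd_one_of_fundamentalSequence_eq_inr e n).symm⟩

theorem stepDown_opow {n : ℕ} {x y : ONote} (h : stepDown n x y) :
    stepDown n (oadd x 1 0) (oadd y 1 0) :=
  TransGen.lift' (fun o => oadd o 1 0) (fun _ _ => stepDown_opow_of_fsStep) _ _ h

theorem reflTransGen_opow {n : ℕ} {x y : ONote} (h : ReflTransGen (FsStep n) x y) :
    ReflTransGen (FsStep n) (oadd x 1 0) (oadd y 1 0) :=
  ReflTransGen.lift' (fun o => oadd o 1 0)
    (fun _ _ h => (stepDown_opow_of_fsStep h).to_reflTransGen) _ _ h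

theorem stepDown_wtower_succ (n j : ℕ) : stepDown n (wtower j) (wtower (j + 1)) := by
  induction j with
  -- `wtower 0 = 1 = ω^0`
  | zero => exact stepDown_opow_of_fsStep (x := 0) (y := 1) ⟨nofun, rfl⟩
  | succ j ih => exact stepDown_opow ih

theorem reflTransGen_wtower (n : ℕ) {i j : ℕ} (h : i ≤ j) :
    ReflTransGen (FsStep n) (wtower i) (wtower j) := by
  induction j, h using Nat.le_induction with
  | base => rfl
  | succ j _ ih => exact ih.trans (stepDown_wtower_succ n j).to_reflTransGen

theorem reflTransGen_fs_opow_of_le {k n : ℕ} (hkn : k ≤ n) {a : ONote}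
    (ha : ReflTransGen (FsStep n) (fs a k) (fs a n)) :
    ReflTransGen (FsStep n) (fs (oadd a 1 0) k) (fs (oadd a 1 0) n) := by
  rcases e : fundamentalSequence a with (_ | a') | f
  · rw [eq_zero_of_fundamentalSequence_eq_none e, fs_oadd_zero_one, fs_oadd_zero_one]
  · rw [fs_oadd_one_of_fundamentalSequence_eq_some e, fs_oadd_one_of_fundamentalSequence_eq_some e]
    exact reflTransGen_oadd_succPNat n a' hkn
  · rw [fs_oadd_one_of_fundamentalSequence_eq_inr e, fs_oadd_one_of_fundamentalSequence_eq_inr e]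
    exact reflTransGen_opow ha

theorem reflTransGen_fs_of_le {k n : ℕ} (hkn : k ≤ n) (o : ONote) :
    ReflTransGen (FsStep n) (fs o k) (fs o n) := by
  induction o with
  | zero => rfl
  | oadd a m b iha ihb =>
    by_cases hb : b = 0
    · subst hb
      obtain ⟨j, rfl⟩ : ∃ j : ℕ, j.succPNat = m := ⟨_, m.succPNat_natPred⟩
      cases j with
      | zero => exact reflTransGen_fs_opow_of_le hkn iha
      | succ j =>
        rw [fs_oadd_succ, fs_oadd_succ]
        exact reflTransGen_oadd a _ (reflTransGen_fs_opow_of_le hkn iha)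
    · rw [fs_oadd_of_ne_zero a m hb, fs_oadd_of_ne_zero a m hb]
      exact reflTransGen_oadd a m ihb

theorem reflTransGen_some {n : ℕ} {x y : ONote} (h : ReflTransGen (FsStep n) x y) :
    ReflTransGen (FsStepE n) (some x) (some y) :=
  ReflTransGen.lift some (fun _ _ h => ⟨by simpa using h.1, congrArg some h.2⟩) _ _ h

theorem stepDownE_fsE {k n : ℕ} (hkn : k ≤ n) {β : Option ONote} (hβ : β ≠ some 0) :
    stepDownE n (fsE β k) β := by
  cases β with
  | none =>
    exact .tail' (reflTransGen_some (reflTransGen_wtower n (Nat.succ_le_succ hkn))) ⟨hβ, rfl⟩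
  | some b => exact .tail' (reflTransGen_some (reflTransGen_fs_of_le hkn b)) ⟨hβ, rfl⟩

end SlowCon

/-- step-down monotonicity in the parameter (Bachmann property),
for ordinals ≤ ε₀ (`none` = ε₀). -/
theorem stmt2 : ∀ (k n : ℕ) (α β : Option ONote), k ≤ n →
    SlowCon.stepDownE k α β → SlowCon.stepDownE n α β := by
  intro k n α β hkn h
  refine Relation.TransGen.closed (fun x y hxy => ?_) α β h
  obtain ⟨hy, rfl⟩ := hxy
  exact SlowCon.stepDownE_fsE hkn hy
end

section
/- For every k ∈ ℕ, every sequence of ordinals α₀ > α₁ > α₂ > … below ε₀ with α_{i+1} <_k α_i for all i (constant step-down parameter k) is finite; i.e., the relation 'α <_k β' is well-founded and in fact any <_k-descending sequence from a fixed α₀ has length at most determined by α₀ and k. -/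
namespace SlowCon
open ONote

lemma fs_lt_s3 (y : ONote) (k : ℕ) (hy : y ≠ 0) : fs y k < y := by
  unfold fs
  have h := fundamentalSequence_has_prop y
  rcases e : fundamentalSequence y with (⟨⟩|a) | f <;> rw [e] at h
  · exact absurd h hy
  · rw [ONote.lt_def, h.1]; exact Order.lt_succ _
  · exact (h.2.1 k).2.1

lemma stepDown_lt {k : ℕ} {a b : ONote} (h : stepDown k a b) : a < b := by
  induction h with
  | single h => exact h.2 ▸ fs_lt_s3 _ _ h.1
  | tail _ h2 ih => exact lt_trans ih (h2.2 ▸ fs_lt_s3 _ _ h2.1)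

lemma wf_stepDown (k : ℕ) : WellFounded (stepDown k) :=
  Subrelation.wf (fun h => stepDown_lt h) (InvImage.wf ONote.repr Ordinal.lt_wf)

end SlowCon

/-- for each fixed `k`, the step-down relation `<_k` is well-founded;
there is no infinite `<_k`-descending sequence. -/
theorem stmt3 :
    (∀ k : ℕ, WellFounded (SlowCon.stepDown k)) ∧
    ∀ (k : ℕ) (a : ℕ → ONote), ¬ (∀ i, SlowCon.stepDown k (a (i + 1)) (a i)) := by
  refine ⟨SlowCon.wf_stepDown, fun k a h => ?_⟩
  obtain ⟨m, ⟨i, hi⟩, hmin⟩ := (SlowCon.wf_stepDown k).has_min (Set.range a) ⟨a 0, 0, rfl⟩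
  exact hmin (a (i + 1)) ⟨i + 1, rfl⟩ (hi ▸ h i)
end

section
/- For every primitive recursive function f : ℕ → ℕ there exists n ∈ ℕ such that f(x) ≤ F_n(x) for all x > 0, where F_n is the n-th function of the fast-growing hierarchy at finite levels. -/
namespace SlowCon

theorem Ffin_zero (m : ℕ) : Ffin 0 m = m + 1 := rfl

theorem Ffin_succ (k m : ℕ) : Ffin (k + 1) m = (Ffin k)^[m + 1] m := rfl

theorem lt_Ffin : ∀ k m : ℕ, m < Ffin k m := by
  intro k
  induction k with
  | zero => intro m; exact Nat.lt_succ_self m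
  | succ k ih =>
    intro m
    rw [Ffin_succ]
    have h : ∀ j, m + j ≤ (Ffin k)^[j] m := by
      intro j
      induction j with
      | zero => simp
      | succ j ihj =>
        rw [Function.iterate_succ_apply']
        calc m + (j + 1) = (m + j) + 1 := by ring
        _ ≤ (Ffin k)^[j] m + 1 := by omega
        _ ≤ Ffin k ((Ffin k)^[j] m) := ih _
    have := h (m + 1)
    omega

theorem add_le_iterate_Ffin (k : ℕ) : ∀ j m : ℕ, m + j ≤ (Ffin k)^[j] m := by
  intro j
  induction j with
  | zero => simp
  | succ j ihj =>
    intro m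
    rw [Function.iterate_succ_apply']
    have := ihj m
    have := lt_Ffin k ((Ffin k)^[j] m)
    omega

theorem iterate_Ffin_count_mono (k m : ℕ) : Monotone fun j => (Ffin k)^[j] m := by
  apply monotone_nat_of_le_succ
  intro j
  simp only [Function.iterate_succ_apply']
  exact (lt_Ffin k _).le

theorem Ffin_strictMono : ∀ k : ℕ, StrictMono (Ffin k) := by
  intro k
  induction k with
  | zero => intro a b h; simpa [Ffin_zero] using h
  | succ k ih =>
    intro a b h
    rw [Ffin_succ, Ffin_succ]
    have hmono : ∀ j, StrictMono (Ffin k)^[j] := fun j => ih.iterate j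
    have h1 : (Ffin k)^[a + 1] a < (Ffin k)^[a + 1] b := hmono _ h
    have h2 : (Ffin k)^[a + 1] b ≤ (Ffin k)^[b + 1] b :=
      iterate_Ffin_count_mono k b (by omega)
    omega

theorem Ffin_mono (k : ℕ) : Monotone (Ffin k) := (Ffin_strictMono k).monotone

theorem ack_le_Ffin : ∀ m n : ℕ, ack m n ≤ Ffin m (n + 1) := by
  intro m
  induction m with
  | zero => intro n; rw [ack_zero, Ffin_zero]; omega
  | succ m ih =>
    intro n
    induction n with
    | zero =>
      rw [ack_succ_zero, Ffin_succ]
      show ack m 1 ≤ (Ffin m)^[2] 1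
      calc ack m 1 ≤ Ffin m 2 := ih 1
      _ ≤ Ffin m (Ffin m 1) := Ffin_mono m (lt_Ffin m 1)
      _ = (Ffin m)^[2] 1 := by rw [Function.iterate_succ_apply', Function.iterate_one]
    | succ n ihn =>
      rw [ack_succ_succ]
      calc ack m (ack (m + 1) n) ≤ Ffin m (ack (m + 1) n + 1) := ih _
      _ ≤ Ffin m (Ffin (m + 1) (n + 1) + 1) := Ffin_mono m (by omega)
      _ ≤ Ffin (m + 1) (n + 2) := by
          rw [Ffin_succ m (n + 1), Ffin_succ m (n + 2)]
          show Ffin m ((Ffin m)^[n + 2] (n + 1) + 1) ≤ (Ffin m)^[n + 3] (n + 2)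
          have heq : (Ffin m)^[n + 3] (n + 2) = Ffin m ((Ffin m)^[n + 2] (n + 2)) :=
            Function.iterate_succ_apply' (Ffin m) (n + 2) (n + 2)
          rw [heq]
          apply Ffin_mono m
          have h1 : Ffin (m + 1) (n + 1) = (Ffin m)^[n + 2] (n + 1) := Ffin_succ m (n + 1)
          have h2 : (Ffin m)^[n + 2] (n + 1) < (Ffin m)^[n + 2] (n + 2) :=
            (Ffin_strictMono m).iterate (n + 2) (by omega)
          omega

theorem Ffin_shift (m x : ℕ) (hx : 0 < x) : Ffin m (x + 1) ≤ Ffin (m + 1) x := by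
  rw [Ffin_succ]
  obtain ⟨y, rfl⟩ := Nat.exists_eq_add_of_lt hx
  rw [show 0 + y + 1 + 1 = (0 + y + 1) + 1 from rfl, Function.iterate_succ_apply']
  apply Ffin_mono
  have := add_le_iterate_Ffin m (0 + y + 1) (0 + y + 1)
  omega

end SlowCon

/-- every primitive recursive function is dominated, for `x > 0`,
by some finite level of the fast-growing hierarchy. -/
theorem stmt7 : ∀ f : ℕ → ℕ, Nat.Primrec f →
    ∃ n : ℕ, ∀ x : ℕ, 0 < x → f x ≤ SlowCon.Ffin n x := by
  intro f hf
  obtain ⟨m, hm⟩ := exists_lt_ack_of_nat_primrec hf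
  refine ⟨m + 1, fun x hx => ?_⟩
  calc f x ≤ ack m x := (hm x).le
  _ ≤ SlowCon.Ffin m (x + 1) := SlowCon.ack_le_Ffin m x
  _ ≤ SlowCon.Ffin (m + 1) x := SlowCon.Ffin_shift m x hx
end

section
/- Over any structure, the formula R(δ₀) → R(δ₁) is equivalent to the formula θ(δ₀,δ₁) ≡ ∃v₀ ∃v₁ [∀z ((z = δ₀ ∨ z = δ₁) → (R(z) ↔ ((z = δ₀ → v₀ = 1) ∧ (z = δ₁ → v₁ = 1)))) ∧ (v₀ = 1 → v₁ = 1)], which contains only one occurrence of the predicate symbol R; here the claim is semantic equivalence for every interpretation of R and every assignment of δ₀, δ₁ in a structure containing at least two elements with a distinguished element 1 and a second element. -/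
/-- over any structure with two distinguished distinct elements `e0 ≠ e1`,
`R δ₀ → R δ₁` is equivalent to the formula
`θ(δ₀,δ₁) ≡ ∃v₀ v₁ [∀z ((z = δ₀ ∨ z = δ₁) → (R z ↔ ((z = δ₀ → v₀ = 1) ∧ (z = δ₁ → v₁ = 1))))
∧ (v₀ = 1 → v₁ = 1)]`, which has only one occurrence of `R`. -/
theorem stmt13 : ∀ (M : Type) (e0 e1 : M), e0 ≠ e1 →
    ∀ (R : M → Prop) (δ₀ δ₁ : M),
      (R δ₀ → R δ₁) ↔
        ∃ v₀ v₁ : M,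
          (∀ z : M, (z = δ₀ ∨ z = δ₁) →
            (R z ↔ ((z = δ₀ → v₀ = e1) ∧ (z = δ₁ → v₁ = e1)))) ∧
          (v₀ = e1 → v₁ = e1) := by
  intro M e0 e1 hne R δ₀ δ₁
  classical
  constructor
  · intro h
    refine ⟨if R δ₀ then e1 else e0, if R δ₁ then e1 else e0, ?_, ?_⟩
    · intro z hz
      rcases hz with rfl | rfl
      · constructor
        · intro hz
          exact ⟨fun _ => by simp [hz], fun hzd => by simp [hzd ▸ hz]⟩
        · intro ⟨h1, _⟩
          by_contra hR
          have := h1 rfl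
          simp [hR] at this
          exact hne this
      · constructor
        · intro hz
          exact ⟨fun hzd => by simp [hzd ▸ hz], fun _ => by simp [hz]⟩
        · intro ⟨_, h2⟩
          by_contra hR
          have := h2 rfl
          simp [hR] at this
          exact hne this
    · intro hv
      by_cases hR : R δ₀
      · simp [h hR]
      · simp [hR] at hv; exact absurd hv hne
  · rintro ⟨v₀, v₁, hall, himp⟩ hR0
    have h0 := (hall δ₀ (Or.inl rfl)).mp hR0
    have hv1 : v₁ = e1 := himp (h0.1 rfl)
    by_cases he : δ₁ = δ₀
    · exact he ▸ hR0
    · exact (hall δ₁ (Or.inr rfl)).mpr ⟨fun h => absurd h he, fun _ => hv1⟩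
end

section
/- Transfinite induction is progressive for the fast-growing hierarchy: for every α ≤ ε₀, if F_β is total for all β < α, then F_α is total. Formally: ∀α ≤ ε₀, (∀β < α, ∀x, ∃y, F_β(x) = y) → (∀x, ∃y, F_α(x) = y). -/
theorem stmt14_iter (G : ℕ → ℕ → Prop) (hG : ∀ x, ∃ y, G x y) :
    ∀ j x, ∃ y, SlowCon.iterRel G j x y := by
  intro j x
  induction j with
  | zero => exact ⟨x, rfl⟩
  | succ j ih =>
    obtain ⟨z, hz⟩ := ih
    obtain ⟨y, hy⟩ := hG z
    exact ⟨y, z, hz, hy⟩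

/-- the fast-growing hierarchy is progressive in totality: for `α ≤ ε₀`
(`none` = ε₀), if `F_β` is total for all `β < α` then `F_α` is total. -/
theorem stmt14 : ∀ α : Option ONote,
    (∀ β : Option ONote, SlowCon.OltE β α → ∀ x : ℕ, ∃ y : ℕ, SlowCon.FRelE β x y) →
    ∀ x : ℕ, ∃ y : ℕ, SlowCon.FRelE α x y := by
  intro α hlt x
  cases α with
  | none => exact hlt (some (SlowCon.wtower (x + 1))) trivial x
  | some a =>
    have htot : ∀ b < a, ∀ x : ℕ, ∃ y, SlowCon.FRel b x y :=
      fun b hb x => hlt (some b) hb x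
    show ∃ y, SlowCon.FRel a x y
    have he := SlowCon.FRel.eq_def a
    dsimp only [] at he
    split at he
    · exact ⟨x + 1, he ▸ rfl⟩
    · rename_i b hp _ _
      have hb : b < a := by rw [ONote.lt_def, hp.1]; exact Order.lt_succ _
      rw [he]
      exact stmt14_iter (SlowCon.FRel b) (htot b hb) (x + 1) x
    · rename_i f hp _ _
      rw [he]
      exact htot (f x) (hp.2.1 x).2.1 x
end

section
/- The jump preserves progressiveness: if a predicate P on ordinals below ε₀ is progressive (∀α, (∀β < α, P(β)) → P(α)), then the jump J[P](γ) := ∀β, ((∀δ < β, P(δ)) → (∀δ < β + ω^γ, P(δ))) is also progressive in γ. -/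
namespace SlowCon

/-- A predicate on ordinals is progressive. -/
def ProgOrd (P : Ordinal → Prop) : Prop := ∀ α, (∀ β < α, P β) → P α

/-- The Gentzen jump `J[P](γ) ≡ ∀β ((∀δ<β, P δ) → ∀δ < β + ω^γ, P δ)`. -/
def Jump (P : Ordinal → Prop) (γ : Ordinal) : Prop :=
  ∀ β, (∀ δ < β, P δ) → ∀ δ < β + Ordinal.omega0 ^ γ, P δ

/-- Transfinite induction up to `α` for `Q`. -/
def TIOrd (α : Ordinal) (Q : Ordinal → Prop) : Prop := ProgOrd Q → ∀ β < α, Q β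

/-- The ordinal ε₀, least fixed point of `x ↦ ω^x`. -/
noncomputable def epsilon0 : Ordinal := Ordinal.nfp (fun x => Ordinal.omega0 ^ x) 0

end SlowCon

/-!
Since `ω ^ 0 = 1`, `J[P](0)` says that `P` passes from below `β` to `β` itself, which is
progressiveness. `J[P](γ)` extends an initial segment on which `P` holds by `ω ^ γ`, so
iterating it `n` times extends by `ω ^ γ * n`, and these are cofinal in `ω ^ (γ + 1)`.
At a limit `γ` the powers `ω ^ γ'` with `γ' < γ` are cofinal in `ω ^ γ`.
-/

namespace SlowCon

open Ordinal Order

variable {P : Ordinal → Prop} {β γ : Ordinal}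

theorem forall_lt_add_of_cofinal {x : Ordinal} (hx : x ≠ 0)
    (h : ∀ d < x, ∃ y, d < y ∧ ∀ δ < β + y, P δ) : ∀ δ < β + x, P δ := by
  intro δ hδ
  obtain ⟨d, hdx, hδd⟩ := (lt_add_iff hx).1 hδ
  obtain ⟨y, hdy, hy⟩ := h d hdx
  exact hy δ (hδd.trans_lt ((add_lt_add_iff_left β).2 hdy))

theorem jump_zero (hP : ProgOrd P) : Jump P 0 := by
  intro β hβ δ hδ
  rw [opow_zero, lt_add_one_iff] at hδ
  obtain hδ | rfl := hδ.lt_or_eq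
  · exact hβ δ hδ
  · exact hP δ hβ

theorem Jump.forall_lt_add_mul_nat (hJ : Jump P γ) (hβ : ∀ δ < β, P δ) (n : ℕ) :
    ∀ δ < β + ω ^ γ * n, P δ := by
  induction n with
  | zero => simpa using hβ
  | succ n ih =>
    rw [Nat.cast_succ, mul_add_one, ← add_assoc]
    exact hJ _ ih

theorem Jump.succ (hJ : Jump P γ) : Jump P (succ γ) := fun _ hβ =>
  forall_lt_add_of_cofinal (opow_ne_zero _ omega0_ne_zero) fun _ hd =>
    let ⟨n, hn⟩ := lt_omega0_opow_succ.1 hd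
    ⟨_, hn, hJ.forall_lt_add_mul_nat hβ n⟩

theorem jump_of_isSuccLimit (hγ : IsSuccLimit γ) (hJ : ∀ γ' < γ, Jump P γ') : Jump P γ :=
  fun _ hβ => forall_lt_add_of_cofinal (opow_ne_zero _ omega0_ne_zero) fun _ hd =>
    let ⟨γ', hγ', hdγ'⟩ := (lt_opow_of_isSuccLimit omega0_ne_zero hγ).1 hd
    ⟨_, hdγ', hJ γ' hγ' _ hβ⟩

end SlowCon

/-- the Gentzen jump preserves progressiveness. -/
theorem stmt15 : ∀ P : Ordinal → Prop, SlowCon.ProgOrd P → SlowCon.ProgOrd (SlowCon.Jump P) := by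
  intro P hP γ hJ
  rcases Ordinal.zero_or_succ_or_isSuccLimit γ with rfl | ⟨γ, rfl⟩ | hγ
  · exact SlowCon.jump_zero hP
  · exact (hJ γ (Order.lt_succ γ)).succ
  · exact SlowCon.jump_of_isSuccLimit hγ hJ
end

section
/- Semantic version of the main reduction: for every natural number n, transfinite induction up to ω_{n+1} for the predicate 'F_γ is total' implies that F_{ε₀}(n) is defined, i.e., TI(ω_{n+1}, γ ↦ (F_γ total)) → ∃y, F_{ε₀}(n) = y. -/
namespace SlowCon

open ONote

lemma iterTot {a : ONote} (h : ∀ x, ∃ y, FRel a x y) :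
    ∀ j x, ∃ y, iterRel (FRel a) j x y := by
  intro j x
  induction j with
  | zero => exact ⟨x, rfl⟩
  | succ j ih =>
    obtain ⟨z, hz⟩ := ih
    obtain ⟨y, hy⟩ := h z
    exact ⟨y, z, hz, hy⟩

lemma FRel_step (o : ONote) (ih : ∀ b < o, ∀ x, ∃ y, FRel b x y) :
    ∀ x, ∃ y, FRel o x y := by
  intro x
  rw [FRel]
  exact match o.fundamentalSequence, fundamentalSequence_has_prop o with
  | Sum.inl none, _ => ⟨x + 1, rfl⟩
  | Sum.inl (some a), hp => by
      have ha : a < o := by rw [ONote.lt_def, hp.1]; exact Order.lt_succ _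
      exact iterTot (ih a ha) (x + 1) x
  | Sum.inr f, hp => ih (f x) (hp.2.1 x).2.1 x

lemma progQ : ProgO (fun γ => ∀ x, ∃ y, FRel γ x y) := FRel_step

end SlowCon

/-- transfinite induction up to `ω_{n+1}` for "`F_γ` is total" implies
that `F_{ε₀}(n)` is defined. -/
theorem stmt17 : ∀ n : ℕ,
    SlowCon.TIO (SlowCon.wtower (n + 1)) (fun γ => ∀ x : ℕ, ∃ y : ℕ, SlowCon.FRel γ x y) →
    ∃ y : ℕ, SlowCon.FRelE none n y := by
  intro n hTI
  have h := hTI SlowCon.progQ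
  exact SlowCon.FRel_step _ (fun b hb => h b hb) n
end
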